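/- arXiv:1304.1680 — 5 statements merged into one kernel-verified Lean document; each statement's English description precedes it below -/
import Mathlib

section
/- For any integer p ≥ 1, let M = max_{x ∈ [0,1]} (x(1-x)^p + x^p(1-x)). Then ex_p(n, C_5) = M·n^{p+1} + o(n^{p+1}); that is, for every ε > 0 there exists N such that for all n ≥ N, |ex_p(n, C_5) - M·n^{p+1}| ≤ ε·n^{p+1}. -/
/-- A graph is `C5`-free if it contains no cycle of length 5 as a subgraph. -/
def C5Free {V : Type*} (G : SimpleGraph V) : Prop :=
  ¬ ∃ v : Fin 5 → V, Function.Injective v ∧ ∀ i : Fin 5, G.Adj (v i) (v (i + 1))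

/-- The sum of the `p`-th powers of the degrees of a finite graph. -/
noncomputable def ep {V : Type*} [Fintype V] (G : SimpleGraph V) (p : ℕ) : ℕ :=
  letI : DecidableRel G.Adj := fun _ _ => Classical.dec _
  ∑ v, G.degree v ^ p

/-- `exP n p` is the maximum of `ep G p` over all `C5`-free graphs on `n` vertices. -/
noncomputable def exP (n p : ℕ) : ℕ :=
  sSup {m | ∃ G : SimpleGraph (Fin n), C5Free G ∧ ep G p = m}

/-!
Around a vertex `u` of a `C₅`-free graph, every triangle `uab` has a vertex among `a, b` with at
most two common neighbours with `u`, so `u` lies in at most `2n` triangles and the graph has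
`O(n²) = o(n³)` triangles. The triangle removal lemma then makes it triangle-free by deleting
`o(n²)` edges, which changes `e_p` by `o(n^{p+1})`. A triangle-free graph of maximum degree `Δ`
has `e_p ≤ Δ (n - Δ)^p + (n - Δ) Δ^p ≤ M n^{p+1}`. Conversely, for a maximiser `x`, the
complete bipartite graph with parts of sizes `⌊x n⌋` and `n - ⌊x n⌋` is `C₅`-free with
`e_p = (M + o(1)) n^{p+1}`.
-/

open Finset SimpleGraph Filter Topology

variable {V : Type*}

lemma ep_eq_sum [Fintype V] (G : SimpleGraph V) [DecidableRel G.Adj] (p : ℕ) :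
    ep G p = ∑ v, G.degree v ^ p := by
  unfold ep
  congr!

lemma C5Free.false_of_cycle {G : SimpleGraph V} (hG : C5Free G) {a b c d e : V}
    (hab : G.Adj a b) (hbc : G.Adj b c) (hcd : G.Adj c d) (hde : G.Adj d e) (hea : G.Adj e a)
    (hac : a ≠ c) (had : a ≠ d) (hbd : b ≠ d) (hbe : b ≠ e) (hce : c ≠ e) : False := by
  refine hG ⟨![a, b, c, d, e], ?_, ?_⟩
  · have := hab.ne; have := hbc.ne; have := hcd.ne; have := hde.ne; have := hea.ne
    intro i j hij
    fin_cases i <;> fin_cases j <;> simp_all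
  · intro i
    fin_cases i
    exacts [hab, hbc, hcd, hde, hea]

lemma c5Free_of_coloring {G : SimpleGraph V} (C : G.Coloring Bool) : C5Free G := by
  rintro ⟨v, -, hv⟩
  have flip (i : Fin 5) : C (v (i + 1)) = !C (v i) :=
    Bool.eq_not_iff.2 (C.valid (hv i)).symm
  have h1 : C (v 1) = !C (v 0) := flip 0
  have h2 : C (v 2) = !C (v 1) := flip 1
  have h3 : C (v 3) = !C (v 2) := flip 2
  have h4 : C (v 4) = !C (v 3) := flip 3
  have h0 : C (v 0) = !C (v 4) := flip 4
  simp [h4, h3, h2, h1] at h0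

/-- The complete bipartite graph with parts `s` and `sᶜ`. -/
def completeBipartiteOn [DecidableEq V] (s : Finset V) : SimpleGraph V :=
  (⊤ : SimpleGraph Bool).comap fun v => decide (v ∈ s)

instance [DecidableEq V] (s : Finset V) : DecidableRel (completeBipartiteOn s).Adj :=
  inferInstanceAs (DecidableRel ((⊤ : SimpleGraph Bool).comap _).Adj)

lemma c5Free_completeBipartiteOn [DecidableEq V] (s : Finset V) : C5Free (completeBipartiteOn s) :=
  c5Free_of_coloring ⟨fun v => decide (v ∈ s), id⟩

section completeBipartiteOn
variable [Fintype V] [DecidableEq V] (s : Finset V)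

lemma degree_completeBipartiteOn_of_mem {v : V} (hv : v ∈ s) :
    (completeBipartiteOn s).degree v = #sᶜ := by
  rw [← card_neighborFinset_eq_degree]
  congr 1
  ext w
  rw [mem_neighborFinset]
  simp [completeBipartiteOn, hv]

lemma degree_completeBipartiteOn_of_notMem {v : V} (hv : v ∉ s) :
    (completeBipartiteOn s).degree v = #s := by
  rw [← card_neighborFinset_eq_degree]
  congr 1
  ext w
  rw [mem_neighborFinset]
  simp [completeBipartiteOn, hv]

lemma ep_completeBipartiteOn (p : ℕ) :
    ep (completeBipartiteOn s) p = #s * #sᶜ ^ p + #sᶜ * #s ^ p := by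
  rw [ep_eq_sum, ← sum_add_sum_compl s,
    sum_const_nat fun v hv => by rw [degree_completeBipartiteOn_of_mem s hv],
    sum_const_nat fun v hv => by rw [degree_completeBipartiteOn_of_notMem s (mem_compl.1 hv)]]

end completeBipartiteOn

lemma SimpleGraph.IsNClique.exists_eq_triple_of_mem [DecidableEq V] {G : SimpleGraph V}
    {t : Finset V} {u : V} (ht : G.IsNClique 3 t) (hu : u ∈ t) :
    ∃ a b, G.Adj u a ∧ G.Adj u b ∧ G.Adj a b ∧ t = {u, a, b} := by
  obtain ⟨a, b, c, hab, hac, hbc, rfl⟩ := is3Clique_iff.1 ht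
  simp only [mem_insert, mem_singleton] at hu
  rcases hu with rfl | rfl | rfl
  · exact ⟨b, c, hab, hac, hbc, rfl⟩
  · exact ⟨a, c, hab.symm, hbc, hac, insert_comm _ _ _⟩
  · exact ⟨a, b, hac.symm, hbc.symm, hab, by ext; simp only [mem_insert, mem_singleton]; tauto⟩

section TriangleCount
variable [Fintype V] [DecidableEq V] {G : SimpleGraph V} [DecidableRel G.Adj]

/-- Otherwise a common neighbour `x ≠ b` of `u, a` and a common neighbour `y ∉ {a, x}` of `u, b`
close the five-cycle `u x a b y`. -/
lemma C5Free.card_inter_neighborFinset_le_two (hG : C5Free G) {u a b : V}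
    (hua : G.Adj u a) (hub : G.Adj u b) (hab : G.Adj a b) :
    #(G.neighborFinset u ∩ G.neighborFinset a) ≤ 2 ∨
      #(G.neighborFinset u ∩ G.neighborFinset b) ≤ 2 := by
  by_contra! h
  obtain ⟨x, hx, hxb⟩ :=
    exists_mem_ne (by omega : 1 < #(G.neighborFinset u ∩ G.neighborFinset a)) b
  obtain ⟨y, hy, hyax⟩ := exists_mem_notMem_of_card_lt_card
    ((card_le_two (a := a) (b := x)).trans_lt h.2)
  simp only [mem_inter, mem_neighborFinset] at hx hy
  simp only [mem_insert, mem_singleton, not_or] at hyax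
  exact hG.false_of_cycle hx.1 hx.2.symm hab hy.2 hy.1.symm hua.ne hub.ne hxb
    (Ne.symm hyax.2) (Ne.symm hyax.1)

lemma C5Free.card_filter_mem_cliqueFinset_le (hG : C5Free G) (u : V) :
    #{t ∈ G.cliqueFinset 3 | u ∈ t} ≤ 2 * Fintype.card V := by
  let common (x : V) : Finset V := G.neighborFinset u ∩ G.neighborFinset x
  let low : Finset V := {x | #(common x) ≤ 2}
  have hsub : {t ∈ G.cliqueFinset 3 | u ∈ t} ⊆
      low.biUnion fun x => (common x).image fun w => {u, x, w} := by
    intro t ht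
    rw [mem_filter, mem_cliqueFinset_iff] at ht
    obtain ⟨a, b, hua, hub, hab, rfl⟩ := ht.1.exists_eq_triple_of_mem ht.2
    rw [mem_biUnion]
    rcases hG.card_inter_neighborFinset_le_two hua hub hab with ha | hb
    · refine ⟨a, mem_filter.2 ⟨mem_univ a, ha⟩, mem_image.2 ⟨b, ?_, rfl⟩⟩
      simp [common, hub, hab]
    · refine ⟨b, mem_filter.2 ⟨mem_univ b, hb⟩, mem_image.2 ⟨a, ?_, by rw [pair_comm]⟩⟩
      simp [common, hua, hab.symm]
  calc #{t ∈ G.cliqueFinset 3 | u ∈ t}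
      ≤ ∑ x ∈ low, #((common x).image fun w => ({u, x, w} : Finset V)) :=
        (card_le_card hsub).trans card_biUnion_le
    _ ≤ ∑ x ∈ low, 2 := sum_le_sum fun x hx => card_image_le.trans (mem_filter.1 hx).2
    _ ≤ 2 * Fintype.card V := by
      rw [sum_const, smul_eq_mul, mul_comm]
      exact Nat.mul_le_mul_left 2 (card_le_univ low)

lemma C5Free.card_cliqueFinset_three_le (hG : C5Free G) :
    #(G.cliqueFinset 3) ≤ 2 * Fintype.card V ^ 2 := by
  have hsub : G.cliqueFinset 3 ⊆ univ.biUnion fun u => {t ∈ G.cliqueFinset 3 | u ∈ t} := by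
    intro t ht
    obtain ⟨u, hu⟩ : t.Nonempty := by
      rw [← card_pos, (mem_cliqueFinset_iff.1 ht).card_eq]; omega
    exact mem_biUnion.2 ⟨u, mem_univ u, mem_filter.2 ⟨ht, hu⟩⟩
  calc #(G.cliqueFinset 3) ≤ ∑ u, #{t ∈ G.cliqueFinset 3 | u ∈ t} :=
        (card_le_card hsub).trans card_biUnion_le
    _ ≤ ∑ _u : V, 2 * Fintype.card V :=
        sum_le_sum fun u _ => hG.card_filter_mem_cliqueFinset_le u
    _ = 2 * Fintype.card V ^ 2 := by rw [sum_const, card_univ, smul_eq_mul]; ring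

end TriangleCount

section DegreeSums
variable [Fintype V] {G : SimpleGraph V} [DecidableRel G.Adj]

lemma SimpleGraph.maxDegree_le_card (G : SimpleGraph V) [DecidableRel G.Adj] :
    G.maxDegree ≤ Fintype.card V :=
  G.maxDegree_le_of_forall_degree_le _ fun v => (G.degree_lt_card_verts v).le

lemma SimpleGraph.CliqueFree.degree_add_degree_le [DecidableEq V] (h : G.CliqueFree 3)
    {u v : V} (huv : G.Adj u v) : G.degree u + G.degree v ≤ Fintype.card V := by
  have hdisj : Disjoint (G.neighborFinset u) (G.neighborFinset v) := by
    rw [Finset.disjoint_left]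
    intro w hu hv
    rw [mem_neighborFinset] at hu hv
    exact h {u, v, w} (is3Clique_triple_iff.2 ⟨huv, hu, hv⟩)
  rw [← card_neighborFinset_eq_degree, ← card_neighborFinset_eq_degree,
    ← card_union_of_disjoint hdisj]
  exact card_le_univ _

/-- The neighbours of a vertex of maximum degree `Δ` have degree at most `n - Δ`, the others at
most `Δ`. -/
lemma SimpleGraph.CliqueFree.sum_degree_pow_le (h : G.CliqueFree 3) (p : ℕ) :
    ∑ v, (G.degree v : ℝ) ^ p ≤
      G.maxDegree * (Fintype.card V - G.maxDegree : ℝ) ^ p +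
        (Fintype.card V - G.maxDegree : ℝ) * (G.maxDegree : ℝ) ^ p := by
  classical
  cases isEmpty_or_nonempty V
  · simp [maxDegree]
  obtain ⟨u, hu⟩ := G.exists_maximal_degree_vertex
  have hcompl : (#(G.neighborFinset u)ᶜ : ℝ) = Fintype.card V - G.maxDegree := by
    rw [card_compl, card_neighborFinset_eq_degree, ← hu,
      Nat.cast_sub G.maxDegree_le_card]
  rw [← sum_add_sum_compl (G.neighborFinset u)]
  gcongr
  · calc ∑ v ∈ G.neighborFinset u, (G.degree v : ℝ) ^ p
        ≤ #(G.neighborFinset u) • (Fintype.card V - G.maxDegree : ℝ) ^ p := by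
          refine sum_le_card_nsmul _ _ _ fun v hv => ?_
          have := h.degree_add_degree_le ((mem_neighborFinset _ _ _).1 hv)
          gcongr
          rw [le_sub_iff_add_le, hu]
          exact_mod_cast (add_comm _ _).trans_le this
      _ = _ := by rw [nsmul_eq_mul, card_neighborFinset_eq_degree, hu]
  · calc ∑ v ∈ (G.neighborFinset u)ᶜ, (G.degree v : ℝ) ^ p
        ≤ #(G.neighborFinset u)ᶜ • (G.maxDegree : ℝ) ^ p :=
          sum_le_card_nsmul _ _ _ fun v _ => by gcongr; exact_mod_cast G.degree_le_maxDegree v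
      _ = _ := by rw [nsmul_eq_mul, hcompl]

/-- At each vertex `aᵖ - bᵖ ≤ (a - b) p nᵖ⁻¹`, and the degree losses add up to twice the number
of deleted edges. -/
lemma sum_degree_pow_le_of_le {G' : SimpleGraph V} [DecidableRel G'.Adj] (hle : G' ≤ G)
    (p : ℕ) :
    ∑ v, (G.degree v : ℝ) ^ p ≤ ∑ v, (G'.degree v : ℝ) ^ p +
      2 * p * (Fintype.card V : ℝ) ^ (p - 1) * (#G.edgeFinset - #G'.edgeFinset) := by
  have hvertex (v : V) : (G.degree v : ℝ) ^ p - (G'.degree v : ℝ) ^ p ≤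
      (G.degree v - G'.degree v) * p * (Fintype.card V : ℝ) ^ (p - 1) := by
    have hd' : (G'.degree v : ℝ) ≤ G.degree v := by exact_mod_cast degree_le_of_le hle
    have hd : (G.degree v : ℝ) ≤ Fintype.card V := by
      exact_mod_cast (G.degree_lt_card_verts v).le
    refine (le_abs_self _).trans ((abs_pow_sub_pow_le _ _ _).trans ?_)
    rw [abs_of_nonneg (sub_nonneg.2 hd'), abs_of_nonneg (by positivity : (0 : ℝ) ≤ G.degree v),
      abs_of_nonneg (by positivity : (0 : ℝ) ≤ G'.degree v), max_eq_left hd']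
    gcongr
  have hdegsum :
      ∑ v, ((G.degree v : ℝ) - G'.degree v) = 2 * (#G.edgeFinset - #G'.edgeFinset) := by
    rw [sum_sub_distrib, ← Nat.cast_sum, ← Nat.cast_sum, sum_degrees_eq_twice_card_edges,
      sum_degrees_eq_twice_card_edges]
    push_cast
    ring
  rw [← sub_le_iff_le_add', ← sum_sub_distrib]
  calc ∑ v, ((G.degree v : ℝ) ^ p - (G'.degree v : ℝ) ^ p)
      ≤ ∑ v, ((G.degree v : ℝ) - G'.degree v) * p * (Fintype.card V : ℝ) ^ (p - 1) :=
        sum_le_sum fun v _ => hvertex v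
    _ = _ := by rw [← sum_mul, ← sum_mul, hdegsum]; ring

end DegreeSums

/-- `n ^ (p + 1) * bipartiteDensity p (a / n)` is `ep` of the complete bipartite graph with parts
of sizes `a` and `n - a`. -/
def bipartiteDensity (p : ℕ) (x : ℝ) : ℝ := x * (1 - x) ^ p + x ^ p * (1 - x)

lemma continuous_bipartiteDensity (p : ℕ) : Continuous (bipartiteDensity p) := by
  unfold bipartiteDensity
  fun_prop

lemma pow_succ_mul_bipartiteDensity_div {N : ℝ} (hN : N ≠ 0) (p : ℕ) (x : ℝ) :
    N ^ (p + 1) * bipartiteDensity p (x / N) = x * (N - x) ^ p + (N - x) * x ^ p := by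
  unfold bipartiteDensity
  rw [one_sub_div hN, div_pow, div_pow]
  field_simp
  ring

lemma mul_sub_pow_add_sub_mul_pow_le {p : ℕ} {M : ℝ}
    (hM : M ∈ upperBounds (bipartiteDensity p '' Set.Icc 0 1)) {x N : ℝ} (hx : 0 ≤ x)
    (hxN : x ≤ N) : x * (N - x) ^ p + (N - x) * x ^ p ≤ M * N ^ (p + 1) := by
  rcases eq_or_ne N 0 with rfl | hN
  · obtain rfl : x = 0 := le_antisymm hxN hx
    simp
  have hN : 0 < N := lt_of_le_of_ne (hx.trans hxN) (Ne.symm hN)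
  rw [← pow_succ_mul_bipartiteDensity_div hN.ne', mul_comm]
  gcongr
  exact hM ⟨x / N, ⟨div_nonneg hx hN.le, div_le_one_of_le₀ hxN hN.le⟩, rfl⟩

lemma C5Free.ep_le [Fintype V] {G : SimpleGraph V} (hG : C5Free G) {p : ℕ} {M ε : ℝ}
    (hM : M ∈ upperBounds (bipartiteDensity p '' Set.Icc 0 1))
    (hV : 2 * (Fintype.card V : ℝ) ^ 2 < triangleRemovalBound ε * Fintype.card V ^ 3) :
    (ep G p : ℝ) ≤ (M + 2 * p * ε) * Fintype.card V ^ (p + 1) := by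
  classical
  have htri : (#(G.cliqueFinset 3) : ℝ) < triangleRemovalBound ε * (Fintype.card V : ℝ) ^ 3 :=
    lt_of_le_of_lt (by exact_mod_cast hG.card_cliqueFinset_three_le) hV
  obtain ⟨G', hle, _, hcut, hG'⟩ := triangle_removal htri
  have hΔ : (G'.maxDegree : ℝ) ≤ Fintype.card V := by exact_mod_cast G'.maxDegree_le_card
  have hcut' : (#G.edgeFinset - #G'.edgeFinset : ℝ) ≤ ε * (Fintype.card V : ℝ) ^ 2 := by
    simpa using hcut.le
  calc (ep G p : ℝ) = ∑ v, (G.degree v : ℝ) ^ p := by rw [ep_eq_sum]; push_cast; rfl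
    _ ≤ ∑ v, (G'.degree v : ℝ) ^ p +
          2 * p * (Fintype.card V : ℝ) ^ (p - 1) * (#G.edgeFinset - #G'.edgeFinset) :=
      sum_degree_pow_le_of_le hle p
    _ ≤ M * (Fintype.card V : ℝ) ^ (p + 1) +
          2 * p * (Fintype.card V : ℝ) ^ (p - 1) * (ε * (Fintype.card V : ℝ) ^ 2) := by
      gcongr
      exact (hG'.sum_degree_pow_le p).trans
        (mul_sub_pow_add_sub_mul_pow_le hM (Nat.cast_nonneg _) hΔ)
    _ = (M + 2 * p * ε) * (Fintype.card V : ℝ) ^ (p + 1) := by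
      rcases p with _ | p
      · simp
      · rw [Nat.add_sub_cancel]; push_cast; ring

lemma ep_le_pow [Fintype V] (G : SimpleGraph V) (p : ℕ) :
    ep G p ≤ Fintype.card V ^ (p + 1) := by
  classical
  rw [ep_eq_sum, pow_succ', ← smul_eq_mul, ← card_univ]
  exact sum_le_card_nsmul _ _ _ fun v _ => Nat.pow_le_pow_left (G.degree_lt_card_verts v).le p

lemma bddAbove_ep_c5Free (n p : ℕ) :
    BddAbove {m | ∃ G : SimpleGraph (Fin n), C5Free G ∧ ep G p = m} :=
  ⟨n ^ (p + 1), by rintro _ ⟨G, -, rfl⟩; simpa using ep_le_pow G p⟩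

lemma ep_le_exP {n : ℕ} {G : SimpleGraph (Fin n)} (hG : C5Free G) (p : ℕ) :
    ep G p ≤ exP n p :=
  le_csSup (bddAbove_ep_c5Free n p) ⟨G, hG, rfl⟩

lemma exists_c5Free_ep_eq_exP (n p : ℕ) :
    ∃ G : SimpleGraph (Fin n), C5Free G ∧ ep G p = exP n p := by
  have hne : {m | ∃ G : SimpleGraph (Fin n), C5Free G ∧ ep G p = m}.Nonempty :=
    ⟨_, ⊥, fun ⟨_, _, h⟩ => h 0, rfl⟩
  exact Nat.sSup_mem hne (bddAbove_ep_c5Free n p)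

lemma eventually_exP_le {p : ℕ} {M ε : ℝ}
    (hM : M ∈ upperBounds (bipartiteDensity p '' Set.Icc 0 1)) (hε : 0 < ε) :
    ∀ᶠ n : ℕ in atTop, (exP n p : ℝ) ≤ (M + ε) * n ^ (p + 1) := by
  set ε' := ε / (2 * p + 1)
  have hε' : 0 < ε' := by positivity
  have hδ := triangleRemovalBound_pos hε'
  filter_upwards [tendsto_natCast_atTop_atTop.eventually_gt_atTop (2 / triangleRemovalBound ε')]
    with n hn
  obtain ⟨G, hG, hGex⟩ := exists_c5Free_ep_eq_exP n p
  have hV : 2 * (n : ℝ) ^ 2 < triangleRemovalBound ε' * n ^ 3 := by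
    rw [div_lt_iff₀ hδ] at hn
    have hn0 : (0 : ℝ) < n := by
      by_contra! h
      nlinarith
    nlinarith [mul_lt_mul_of_pos_left hn (pow_pos hn0 2)]
  calc (exP n p : ℝ) = ep G p := by rw [hGex]
    _ ≤ (M + 2 * p * ε') * n ^ (p + 1) := by simpa using hG.ep_le hM (by simpa using hV)
    _ ≤ (M + ε) * n ^ (p + 1) := by
      gcongr
      rw [mul_div_assoc', div_le_iff₀ (by positivity)]
      nlinarith

lemma eventually_le_exP {p : ℕ} {M ε : ℝ} (hM : M ∈ bipartiteDensity p '' Set.Icc 0 1)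
    (hε : 0 < ε) : ∀ᶠ n : ℕ in atTop, (M - ε) * n ^ (p + 1) ≤ exP n p := by
  obtain ⟨x, hx, rfl⟩ := hM
  have hlim : Tendsto (fun n : ℕ => bipartiteDensity p (⌊x * n⌋₊ / n)) atTop
      (𝓝 (bipartiteDensity p x)) :=
    ((continuous_bipartiteDensity p).tendsto x).comp
      ((tendsto_nat_floor_mul_div_atTop hx.1).comp tendsto_natCast_atTop_atTop)
  filter_upwards [hlim.eventually_const_lt (sub_lt_self _ hε), eventually_ne_atTop 0]
    with n hn hn0
  have ha : ⌊x * n⌋₊ ≤ n := Nat.floor_le_of_le (mul_le_of_le_one_left n.cast_nonneg hx.2)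
  obtain ⟨s, -, hs⟩ := exists_subset_card_eq (s := (univ : Finset (Fin n))) (by simpa using ha)
  have hsc : (#sᶜ : ℝ) = n - ⌊x * n⌋₊ := by
    rw [card_compl, Fintype.card_fin, hs, Nat.cast_sub ha]
  calc (bipartiteDensity p x - ε) * n ^ (p + 1)
      ≤ n ^ (p + 1) * bipartiteDensity p (⌊x * n⌋₊ / n) := by
        rw [mul_comm]; gcongr
    _ = ep (completeBipartiteOn s) p := by
      rw [pow_succ_mul_bipartiteDensity_div (Nat.cast_ne_zero.2 hn0), ep_completeBipartiteOn]
      push_cast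
      rw [hsc, hs]
    _ ≤ exP n p := by exact_mod_cast ep_le_exP (c5Free_completeBipartiteOn s) p

theorem stmt1_general (p : ℕ) (M : ℝ)
    (hM : IsGreatest ((fun x : ℝ => x * (1 - x) ^ p + x ^ p * (1 - x)) ''
      Set.Icc (0:ℝ) 1) M) :
    ∀ ε : ℝ, 0 < ε → ∃ N : ℕ, ∀ n : ℕ, N ≤ n →
      |(exP n p : ℝ) - M * (n : ℝ) ^ (p + 1)| ≤ ε * (n : ℝ) ^ (p + 1) := by
  intro ε hε
  refine eventually_atTop.1 ?_
  filter_upwards [eventually_exP_le hM.2 hε, eventually_le_exP hM.1 hε] with n hupper hlower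
  rw [abs_le]
  constructor <;> linarith

theorem stmt1 (p : ℕ) (hp : 1 ≤ p) (M : ℝ)
    (hM : IsGreatest ((fun x : ℝ => x * (1 - x) ^ p + x ^ p * (1 - x)) ''
      Set.Icc (0:ℝ) 1) M) :
    ∀ ε : ℝ, 0 < ε → ∃ N : ℕ, ∀ n : ℕ, N ≤ n →
      |(exP n p : ℝ) - M * (n : ℝ) ^ (p + 1)| ≤ ε * (n : ℝ) ^ (p + 1) :=
  stmt1_general p M hM
end

section
/- (Erdős–Gallai) Let k be a nonnegative integer and let G be a simple graph on n vertices. If the number of edges of G is strictly greater than k·n/2, then G contains a path on k + 2 vertices (i.e., k + 2 distinct vertices v_1, ..., v_{k+2} such that v_i v_{i+1} is an edge for each 1 ≤ i ≤ k+1). -/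
/-!
Induction on the number of vertices, in the form `∑ deg ≤ k n` for graphs without a path on
`k + 2` vertices. A vertex of degree at most `k / 2` can be deleted. Otherwise take a longest
path `w₀ … w_{L-1}`, with `L ≤ k + 1`: all neighbours of its ends lie on it, and since the two
end degrees add up to at least `k + 1 ≥ L`, pigeonhole gives crossing chords `w₀ w_{j+1}` and
`w_{L-1} w_j`, which close the path into a cycle through the same `L` vertices. A vertex outside
adjacent to this cycle would give a longer path, so the cycle's vertices form a union of
components whose degrees are at most `L - 1 ≤ k`; delete them.
-/

open Finset

namespace SimpleGraph

variable {V W : Type*} {G : SimpleGraph V} {m : ℕ} {w c : ℕ → V}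

def IsPathOfOrder (G : SimpleGraph V) (m : ℕ) (w : ℕ → V) : Prop :=
  Set.InjOn w (Set.Iio m) ∧ ∀ i, i + 1 < m → G.Adj (w i) (w (i + 1))

def HasPathOfOrder (G : SimpleGraph V) (m : ℕ) : Prop :=
  ∃ w, G.IsPathOfOrder m w

-- `m = 2` is allowed (an edge traversed back and forth): all that matters is that every
-- rotation is a path.
def IsCycleOfOrder (G : SimpleGraph V) (m : ℕ) (c : ℕ → V) : Prop :=
  Set.InjOn c (Set.Iio m) ∧ ∀ i < m, G.Adj (c i) (c ((i + 1) % m))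

namespace IsPathOfOrder

theorem mono {m' : ℕ} (hw : G.IsPathOfOrder m w) (hm : m' ≤ m) : G.IsPathOfOrder m' w :=
  ⟨hw.1.mono (Set.Iio_subset_Iio hm), fun i hi => hw.2 i (by omega)⟩

theorem map {H : SimpleGraph W} (f : G ↪g H) (hw : G.IsPathOfOrder m w) :
    H.IsPathOfOrder m (f ∘ w) :=
  ⟨f.injective.comp_injOn hw.1, fun i hi => f.map_adj_iff.mpr (hw.2 i hi)⟩

theorem card_le [Fintype V] (hw : G.IsPathOfOrder m w) : m ≤ Fintype.card V := by
  simpa using Finset.card_le_card_of_injOn (s := range m) (t := univ) w (fun _ _ => mem_univ _)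
    (by simpa using hw.1)

theorem reverse (hw : G.IsPathOfOrder m w) : G.IsPathOfOrder m (fun i => w (m - 1 - i)) := by
  refine ⟨fun i hi j hj hij => ?_, fun i hi => ?_⟩
  · simp only [Set.mem_Iio] at hi hj
    have := hw.1 (show m - 1 - i < m by omega) (show m - 1 - j < m by omega) hij
    omega
  · have := (hw.2 (m - 1 - (i + 1)) (by omega)).symm
    rwa [show m - 1 - (i + 1) + 1 = m - 1 - i by omega] at this

theorem cons (hw : G.IsPathOfOrder m w) {x : V} (hx : ∀ i < m, w i ≠ x) (hadj : G.Adj x (w 0)) :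
    G.IsPathOfOrder (m + 1) (fun | 0 => x | i + 1 => w i) := by
  refine ⟨?_, ?_⟩
  · rintro (_ | i) hi (_ | j) hj hij <;> simp only [Set.mem_Iio] at hi hj
    · rfl
    · exact absurd hij.symm (hx j (by omega))
    · exact absurd hij (hx i (by omega))
    · simpa using hw.1 (show i < m by omega) (show j < m by omega) hij
  · rintro (_ | i) hi
    · exact hadj
    · exact hw.2 i (by omega)

theorem exists_eq_of_adj_head (hw : G.IsPathOfOrder m w) (hmax : ¬ G.HasPathOfOrder (m + 1))
    {x : V} (hx : G.Adj (w 0) x) : ∃ i < m, w i = x := by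
  by_contra! hout
  exact hmax ⟨_, hw.cons hout hx.symm⟩

theorem exists_eq_of_adj_last (hw : G.IsPathOfOrder m w) (hmax : ¬ G.HasPathOfOrder (m + 1))
    {x : V} (hx : G.Adj (w (m - 1)) x) : ∃ i < m, w i = x := by
  obtain ⟨i, hi, rfl⟩ := hw.reverse.exists_eq_of_adj_head hmax (x := x) (by simpa using hx)
  exact ⟨m - 1 - i, by omega, rfl⟩

theorem card_filter_adj [Fintype V] [DecidableRel G.Adj] (hw : G.IsPathOfOrder m w) {x : V}
    (hx : ∀ y, G.Adj x y → ∃ i < m, w i = y) :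
    #{i ∈ range m | G.Adj x (w i)} = G.degree x := by
  classical
  have hnbr : G.neighborFinset x = {i ∈ range m | G.Adj x (w i)}.image w := by
    ext y
    simp only [mem_neighborFinset, mem_image, mem_filter, mem_range]
    constructor
    · intro hy
      obtain ⟨i, hi, rfl⟩ := hx y hy
      exact ⟨i, ⟨hi, hy⟩, rfl⟩
    · rintro ⟨i, ⟨-, hi⟩, rfl⟩
      exact hi
  rw [← card_neighborFinset_eq_degree, hnbr, card_image_of_injOn]
  exact hw.1.mono fun i hi => by simpa using (mem_filter.mp hi).1

-- Pigeonhole: the `deg (w 0)` indices `i` with `w 0 ~ w i` and the `deg (w (L - 1))` indices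
-- `j + 1` with `w (L - 1) ~ w j` all lie in `[1, L)`.
theorem exists_crossing_chords [Fintype V] [DecidableRel G.Adj] {L : ℕ}
    (hw : G.IsPathOfOrder L w) (hL : 0 < L)
    (h₀ : ∀ y, G.Adj (w 0) y → ∃ i < L, w i = y)
    (h₁ : ∀ y, G.Adj (w (L - 1)) y → ∃ i < L, w i = y)
    (hdeg : L ≤ G.degree (w 0) + G.degree (w (L - 1))) :
    ∃ j, j + 1 < L ∧ G.Adj (w 0) (w (j + 1)) ∧ G.Adj (w (L - 1)) (w j) := by
  set A := {i ∈ range L | G.Adj (w 0) (w i)}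
  set B := {i ∈ range L | G.Adj (w (L - 1)) (w i)}
  have hA : A ⊆ Ico 1 L := fun i hi => by
    simp only [A, mem_filter, mem_range] at hi
    have : i ≠ 0 := by rintro rfl; exact G.irrefl hi.2
    simp only [mem_Ico]; omega
  have hB : B.map (addRightEmbedding 1) ⊆ Ico 1 L := fun _ h => by
    obtain ⟨i, hi, rfl⟩ := mem_map.mp h
    obtain ⟨hi, hadj⟩ : i < L ∧ G.Adj (w (L - 1)) (w i) := by simpa [B] using hi
    have : i ≠ L - 1 := by rintro rfl; exact G.irrefl hadj
    simp only [mem_Ico, addRightEmbedding_apply]; omega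
  obtain ⟨_, hjAB⟩ := inter_nonempty_of_card_lt_card_add_card hA hB (by
    rw [card_map, hw.card_filter_adj h₀, hw.card_filter_adj h₁, Nat.card_Ico]; omega)
  obtain ⟨hjA, hjB⟩ := mem_inter.mp hjAB
  obtain ⟨j, hj, rfl⟩ := mem_map.mp hjB
  simp only [A, B, mem_filter, mem_range, addRightEmbedding_apply] at hjA hj
  exact ⟨j, hjA.1, hjA.2, hj.2⟩

theorem isCycleOfOrder_of_crossing_chords {L j : ℕ} (hw : G.IsPathOfOrder L w) (hj : j + 1 < L)
    (h₀ : G.Adj (w 0) (w (j + 1))) (h₁ : G.Adj (w (L - 1)) (w j)) :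
    G.IsCycleOfOrder L (fun i => w (if i ≤ j then i else L + j - i)) := by
  refine ⟨fun i hi i' hi' h => ?_, fun i hi => ?_⟩
  · simp only [Set.mem_Iio] at hi hi'
    have := hw.1 (by simp only [Set.mem_Iio]; split_ifs <;> omega)
      (by simp only [Set.mem_Iio]; split_ifs <;> omega) h
    split_ifs at this <;> omega
  · dsimp only
    rcases lt_trichotomy i j with hij | rfl | hij
    · rw [Nat.mod_eq_of_lt (by omega), if_pos hij.le, if_pos (show i + 1 ≤ j by omega)]
      exact hw.2 i (by omega)
    · rw [Nat.mod_eq_of_lt hj, if_pos le_rfl, if_neg (by omega),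
        show L + i - (i + 1) = L - 1 by omega]
      exact h₁.symm
    · by_cases hiL : i + 1 < L
      · rw [Nat.mod_eq_of_lt hiL, if_neg (by omega), if_neg (by omega),
          show L + j - i = L + j - (i + 1) + 1 by omega]
        exact (hw.2 _ (by omega)).symm
      · rw [show i + 1 = L by omega, Nat.mod_self, if_neg (by omega), if_pos (Nat.zero_le _),
          show L + j - i = j + 1 by omega]
        exact h₀.symm

end IsPathOfOrder

theorem HasPathOfOrder.map {H : SimpleGraph W} (f : G ↪g H) (h : G.HasPathOfOrder m) :
    H.HasPathOfOrder m :=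
  let ⟨w, hw⟩ := h; ⟨f ∘ w, hw.map f⟩

theorem Adj.hasPathOfOrder_two {x y : V} (h : G.Adj x y) : G.HasPathOfOrder 2 :=
  have hy : G.IsPathOfOrder 1 (fun _ => y) :=
    ⟨fun i hi j hj _ => by simp only [Set.mem_Iio] at hi hj; omega, fun i hi => by omega⟩
  ⟨_, hy.cons (fun _ _ => h.ne.symm) h⟩

theorem HasPathOfOrder.exists_not_hasPathOfOrder_succ [Finite V] (h : G.HasPathOfOrder m) :
    ∃ L, m ≤ L ∧ G.HasPathOfOrder L ∧ ¬ G.HasPathOfOrder (L + 1) := by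
  have := Fintype.ofFinite V
  by_contra! hext
  have hall : ∀ j, G.HasPathOfOrder (m + j) := fun j => by
    induction j with
    | zero => exact h
    | succ j ih => exact hext (m + j) (by omega) ih
  obtain ⟨w, hw⟩ := hall (Fintype.card V + 1)
  have := hw.card_le
  omega

namespace IsCycleOfOrder

theorem isPathOfOrder_rotate (hc : G.IsCycleOfOrder m c) (t : ℕ) :
    G.IsPathOfOrder m (fun i => c ((t + i) % m)) := by
  refine ⟨fun i hi i' hi' h => ?_, fun i hi => ?_⟩
  · simp only [Set.mem_Iio] at hi hi'
    have hmod : (t + i) % m = (t + i') % m :=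
      hc.1 (Nat.mod_lt _ (by omega)) (Nat.mod_lt _ (by omega)) h
    have := Nat.ModEq.add_left_cancel' t hmod
    rwa [Nat.ModEq, Nat.mod_eq_of_lt hi, Nat.mod_eq_of_lt hi'] at this
  · have := hc.2 ((t + i) % m) (Nat.mod_lt _ (by omega))
    simpa only [Nat.mod_add_mod, add_assoc] using this

theorem hasPathOfOrder_succ (hc : G.IsCycleOfOrder m c) {t : ℕ} (ht : t < m) {x : V}
    (hx : ∀ i < m, c i ≠ x) (hadj : G.Adj x (c t)) : G.HasPathOfOrder (m + 1) := by
  refine ⟨_, (hc.isPathOfOrder_rotate t).cons (fun i hi => hx _ (Nat.mod_lt _ (by omega))) ?_⟩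
  simpa [Nat.mod_eq_of_lt ht] using hadj

theorem neighborFinset_subset [Fintype V] [DecidableRel G.Adj] [DecidableEq V]
    (hc : G.IsCycleOfOrder m c) (hmax : ¬ G.HasPathOfOrder (m + 1)) {y : V}
    (hy : y ∈ (range m).image c) : G.neighborFinset y ⊆ (range m).image c := by
  obtain ⟨t, ht, rfl⟩ := mem_image.mp hy
  intro z hz
  by_contra hout
  exact hmax (hc.hasPathOfOrder_succ (mem_range.mp ht)
    (fun i hi h => hout (mem_image.mpr ⟨i, mem_range.mpr hi, h⟩))
    ((mem_neighborFinset ..).mp hz).symm)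

end IsCycleOfOrder

section Degrees

variable [Fintype V] [DecidableRel G.Adj] {k : ℕ}

theorem exists_closed_finset_of_not_hasPathOfOrder [Nonempty V]
    (hpath : ¬ G.HasPathOfOrder (k + 2)) (hdeg : ∀ v, k < 2 * G.degree v) :
    ∃ T : Finset V, T.Nonempty ∧ #T ≤ k + 1 ∧ ∀ y ∈ T, G.neighborFinset y ⊆ T := by
  classical
  obtain ⟨v⟩ := ‹Nonempty V›
  obtain ⟨u, hu⟩ := G.degree_pos_iff_exists_adj v |>.mp (by have := hdeg v; omega)
  obtain ⟨L, hL2, ⟨w, hw⟩, hmax⟩ := hu.hasPathOfOrder_two.exists_not_hasPathOfOrder_succ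
  have hLk : L ≤ k + 1 := by
    by_contra!
    exact hpath ⟨w, hw.mono this⟩
  have h₀ := fun y => hw.exists_eq_of_adj_head hmax (x := y)
  have h₁ := fun y => hw.exists_eq_of_adj_last hmax (x := y)
  obtain ⟨j, hj, hadj₀, hadj₁⟩ := hw.exists_crossing_chords (by omega) h₀ h₁
    (by have := hdeg (w 0); have := hdeg (w (L - 1)); omega)
  obtain ⟨c, hc⟩ : ∃ c, G.IsCycleOfOrder L c :=
    ⟨_, hw.isCycleOfOrder_of_crossing_chords hj hadj₀ hadj₁⟩
  exact ⟨(range L).image c, ⟨c 0, mem_image_of_mem c (mem_range.mpr (by omega))⟩,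
    card_image_le.trans (by simpa), fun y hy => hc.neighborFinset_subset hmax hy⟩

theorem sum_degrees_le_of_induce_compl_singleton [DecidableEq V] {u : V}
    (hu : 2 * G.degree u ≤ k)
    (h : ∑ v, (G.induce {u}ᶜ).degree v ≤ k * Fintype.card ↥({u}ᶜ : Set V)) :
    ∑ v, G.degree v ≤ k * Fintype.card V := by
  rw [sum_degrees_eq_twice_card_edges, card_edgeFinset_induce_compl_singleton,
    card_edgeFinset_deleteIncidenceSet, Fintype.card_compl_set, Set.card_singleton] at h
  have hV : k * (Fintype.card V - 1) + k = k * Fintype.card V := by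
    have := Fintype.card_pos_iff.mpr ⟨u⟩
    rw [← Nat.mul_succ]; congr; omega
  rw [sum_degrees_eq_twice_card_edges]
  omega

theorem sum_degrees_eq_add_sum_degrees_induce_compl [DecidableEq V] (T : Finset V)
    (hT : ∀ y ∈ T, G.neighborFinset y ⊆ T) :
    ∑ v, G.degree v = ∑ v ∈ T, G.degree v + ∑ v, (G.induce ↑Tᶜ).degree v := by
  have hcompl (v : ↥(↑Tᶜ : Set V)) : (G.induce ↑Tᶜ).degree v = G.degree v := by
    have hv : (v : V) ∉ T := by simpa using v.2
    have hsub : G.neighborSet v ⊆ ↑Tᶜ := fun z hz => by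
      have hzT : z ∉ T := fun hzT => hv (hT z hzT ((mem_neighborFinset ..).mpr hz.symm))
      simpa using hzT
    convert degree_induce_of_neighborSet_subset hsub
  rw [← sum_add_sum_compl T, Fintype.sum_congr _ _ hcompl]
  congr 1
  exact (sum_coe_sort Tᶜ _).symm

theorem sum_degrees_le_of_induce_compl [DecidableEq V] {T : Finset V}
    (hT : ∀ y ∈ T, G.neighborFinset y ⊆ T) (hTk : #T ≤ k + 1)
    (h : ∑ v, (G.induce ↑Tᶜ).degree v ≤ k * Fintype.card ↥(↑Tᶜ : Set V)) :
    ∑ v, G.degree v ≤ k * Fintype.card V := by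
  have hdeg : ∀ y ∈ T, G.degree y ≤ k := fun y hy => by
    have hsub : G.neighborFinset y ⊆ T.erase y := fun z hz =>
      mem_erase.mpr ⟨(G.ne_of_adj ((mem_neighborFinset ..).mp hz)).symm, hT y hy hz⟩
    have := card_le_card hsub
    rw [card_neighborFinset_eq_degree, card_erase_of_mem hy] at this
    omega
  have hsumT : ∑ v ∈ T, G.degree v ≤ #T * k := by simpa using sum_le_card_nsmul T _ k hdeg
  have hcard : Fintype.card ↥(↑Tᶜ : Set V) = Fintype.card V - #T := by
    simp only [coe_compl, Fintype.card_compl_set, coe_sort_coe, Fintype.card_coe]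
  have hV : k * (Fintype.card V - #T) + #T * k = k * Fintype.card V := by
    rw [mul_comm (#T), ← mul_add, Nat.sub_add_cancel (card_le_univ T)]
  rw [sum_degrees_eq_add_sum_degrees_induce_compl T hT]
  rw [hcard] at h
  omega

end Degrees

theorem sum_degrees_le_of_not_hasPathOfOrder [Fintype V] (G : SimpleGraph V)
    [DecidableRel G.Adj] {k : ℕ} (hpath : ¬ G.HasPathOfOrder (k + 2)) :
    ∑ v, G.degree v ≤ k * Fintype.card V := by
  classical
  induction hn : Fintype.card V using Nat.strong_induction_on generalizing V with
  | _ n ih =>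
  subst hn
  have ih' {s : Set V} [Fintype s] (hs : Fintype.card s < Fintype.card V) :
      ∑ v, (G.induce s).degree v ≤ k * Fintype.card s :=
    ih _ hs (G.induce s) (fun h => hpath (h.map (Embedding.induce s))) rfl
  by_cases hlow : ∃ u, 2 * G.degree u ≤ k
  · obtain ⟨u, hu⟩ := hlow
    refine sum_degrees_le_of_induce_compl_singleton hu (ih' ?_)
    rw [Fintype.card_compl_set, Set.card_singleton]
    have := Fintype.card_pos_iff.mpr ⟨u⟩
    omega
  · push Not at hlow
    cases isEmpty_or_nonempty V
    · simp
    obtain ⟨T, hTne, hTk, hT⟩ := exists_closed_finset_of_not_hasPathOfOrder hpath hlow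
    refine sum_degrees_le_of_induce_compl hT hTk (ih' ?_)
    simp only [coe_compl, Fintype.card_compl_set, coe_sort_coe, Fintype.card_coe]
    have := card_le_univ T
    have := hTne.card_pos
    omega

end SimpleGraph

/-- **Erdős–Gallai**: a graph on `n` vertices with more than `k·n/2` edges
contains a path on `k + 2` vertices. -/
theorem stmt3 {V : Type*} [Fintype V] (k : ℕ) (G : SimpleGraph V)
    [DecidableRel G.Adj]
    (h : (k : ℝ) * (Fintype.card V : ℝ) / 2 < (G.edgeFinset.card : ℝ)) :
    ∃ v : Fin (k + 2) → V, Function.Injective v ∧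
      ∀ i : Fin (k + 1), G.Adj (v i.castSucc) (v i.succ) := by
  have hsum : k * Fintype.card V < ∑ v, G.degree v := by
    rw [SimpleGraph.sum_degrees_eq_twice_card_edges]
    exact_mod_cast (by linarith : (k : ℝ) * Fintype.card V < 2 * G.edgeFinset.card)
  obtain ⟨w, hw⟩ : G.HasPathOfOrder (k + 2) := by
    by_contra hpath
    exact hsum.not_ge (SimpleGraph.sum_degrees_le_of_not_hasPathOfOrder G hpath)
  exact ⟨fun i => w i, fun i j hij => Fin.ext (hw.1 i.2 j.2 hij), fun i => hw.2 i (by omega)⟩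
end

section
/- Let G be a simple graph on a finite vertex set V, let u be a vertex of maximum degree in G, and suppose the neighborhood N_G(u) is an independent set in G. Let H be the complete bipartite graph on V with vertex classes Y = N_G(u) and X = V \ N_G(u). Then deg_H(v) ≥ deg_G(v) for every vertex v ∈ V, H contains no cycle of length 5, and consequently e_p(H) ≥ e_p(G) for every positive integer p. -/
lemma ep_eq {V : Type*} [Fintype V] (G : SimpleGraph V) [inst : DecidableRel G.Adj] (p : ℕ) :
    ep G p = ∑ v, G.degree v ^ p := by
  unfold ep
  congr 1
  ext v
  congr 1
  unfold SimpleGraph.degree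
  congr 1
  ext w
  simp [SimpleGraph.mem_neighborFinset]

theorem stmt5 {V : Type*} [Fintype V] (G : SimpleGraph V) [DecidableRel G.Adj]
    (u : V) (hmax : ∀ v : V, G.degree v ≤ G.degree u)
    (hind : ∀ a b : V, G.Adj u a → G.Adj u b → ¬ G.Adj a b)
    (H : SimpleGraph V) [DecidableRel H.Adj]
    (hH : ∀ a b : V, H.Adj a b ↔
      ((G.Adj u a ∧ ¬ G.Adj u b) ∨ (¬ G.Adj u a ∧ G.Adj u b))) :
    (∀ v : V, G.degree v ≤ H.degree v) ∧ C5Free H ∧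
      ∀ p : ℕ, 1 ≤ p → ep G p ≤ ep H p := by
  have hdeg : ∀ v : V, G.degree v ≤ H.degree v := by
    intro v
    by_cases hv : G.Adj u v
    · unfold SimpleGraph.degree
      apply Finset.card_le_card
      intro w hw
      rw [SimpleGraph.mem_neighborFinset] at *
      rw [hH]
      left
      refine ⟨hv, fun hw' => ?_⟩
      exact hind v w hv hw' hw
    · have h2 : H.neighborFinset v = G.neighborFinset u := by
        ext w
        simp only [SimpleGraph.mem_neighborFinset, hH, hv]
        tauto
      calc G.degree v ≤ G.degree u := hmax v
        _ = (G.neighborFinset u).card := rfl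
        _ = (H.neighborFinset v).card := by rw [h2]
        _ = H.degree v := rfl
  refine ⟨hdeg, ?_, ?_⟩
  · rintro ⟨v, hinj, hadj⟩
    have h := fun i => (hH (v i) (v (i + 1))).mp (hadj i)
    have h0 := h 0; have h1 := h 1; have h2 := h 2; have h3 := h 3; have h4 := h 4
    have e0 : (0 : Fin 5) + 1 = 1 := by decide
    have e1 : (1 : Fin 5) + 1 = 2 := by decide
    have e2 : (2 : Fin 5) + 1 = 3 := by decide
    have e3 : (3 : Fin 5) + 1 = 4 := by decide
    have e4 : (4 : Fin 5) + 1 = 0 := by decide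
    rw [e0] at h0; rw [e1] at h1; rw [e2] at h2; rw [e3] at h3; rw [e4] at h4
    tauto
  · intro p hp
    rw [ep_eq, ep_eq]
    apply Finset.sum_le_sum
    intro v _
    exact Nat.pow_le_pow_left (hdeg v) p
end

section
/- Let G be a simple graph containing no cycle of length 5 as a subgraph, and let v be any vertex of G. Then the number of edges of G having both endpoints in the neighborhood N_G(v) is at most deg_G(v). -/
open Finset

namespace SimpleGraph

variable {V : Type*} (G : SimpleGraph V)

def edgesWithin [DecidableRel G.Adj] (S : Finset V) : Finset (Sym2 V) :=
  {e ∈ S.sym2 | e ∈ G.edgeSet}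

def P4FreeOn (S : Finset V) : Prop :=
  ∀ ⦃a b c d⦄, a ∈ S → b ∈ S → c ∈ S → d ∈ S →
    G.Adj a b → G.Adj b c → G.Adj c d → a ≠ c → b ≠ d → a ≠ d → False

variable {G}

lemma filter_edgeFinset_eq_edgesWithin [Fintype V] [DecidableEq V] [DecidableRel G.Adj]
    (S : Finset V) : {e ∈ G.edgeFinset | ∀ x ∈ e, x ∈ S} = G.edgesWithin S := by
  ext e
  simp [edgesWithin, and_comm]

lemma card_edgesWithin_erase_add [DecidableEq V] [DecidableRel G.Adj] {S : Finset V} {u : V}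
    (hu : u ∈ S) :
    #(G.edgesWithin (S.erase u)) + #{w ∈ S | G.Adj u w} = #(G.edgesWithin S) := by
  have hsplit : G.edgesWithin S =
      G.edgesWithin (S.erase u) ∪ {w ∈ S | G.Adj u w}.map (Sym2.mkEmbedding u) := by
    ext e
    induction e using Sym2.ind with
    | _ x y =>
      simp only [edgesWithin, mem_filter, mem_union, mem_map, Sym2.mkEmbedding_apply,
        mk_mem_sym2_iff, mem_erase, mem_edgeSet, Sym2.eq_iff]
      constructor
      · rintro ⟨⟨hx, hy⟩, hxy⟩
        by_cases hxu : x = u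
        · exact .inr ⟨y, ⟨hy, hxu ▸ hxy⟩, .inl ⟨hxu.symm, rfl⟩⟩
        by_cases hyu : y = u
        · exact .inr ⟨x, ⟨hx, hyu ▸ hxy.symm⟩, .inr ⟨hyu.symm, rfl⟩⟩
        · exact .inl ⟨⟨⟨hxu, hx⟩, hyu, hy⟩, hxy⟩
      · rintro (⟨⟨⟨-, hx⟩, -, hy⟩, hxy⟩ |
          ⟨w, ⟨hw, huw⟩, ⟨rfl, rfl⟩ | ⟨rfl, rfl⟩⟩)
        exacts [⟨⟨hx, hy⟩, hxy⟩, ⟨⟨hu, hw⟩, huw⟩, ⟨⟨hw, hu⟩, huw.symm⟩]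
  have hdisj : Disjoint (G.edgesWithin (S.erase u))
      ({w ∈ S | G.Adj u w}.map (Sym2.mkEmbedding u)) := by
    refine Finset.disjoint_left.mpr fun e he he' => ?_
    obtain ⟨w, -, rfl⟩ := mem_map.mp he'
    simp [edgesWithin] at he
  rw [hsplit, card_union_of_disjoint hdisj, card_map]

lemma card_filter_adj_le_of_subset [DecidableRel G.Adj] {S T : Finset V} {u : V}
    (h : ∀ w ∈ S, G.Adj u w → w ∈ T) : #{w ∈ S | G.Adj u w} ≤ #T :=
  card_le_card fun w hw => h w (mem_filter.mp hw).1 (mem_filter.mp hw).2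

lemma card_edgesWithin_le_of_isolated_triple [DecidableEq V] [DecidableRel G.Adj]
    {S : Finset V} {u a b : V} (hu : u ∈ S) (hua : a ∈ S.erase u)
    (huab : b ∈ (S.erase u).erase a) (hNu : ∀ w ∈ S, G.Adj u w → w = a ∨ w = b)
    (hNa : ∀ w ∈ S, G.Adj a w → w = u ∨ w = b)
    (hNb : ∀ w ∈ S, G.Adj b w → w = u ∨ w = a) :
    #(G.edgesWithin S) ≤ #(G.edgesWithin (((S.erase u).erase a).erase b)) + 3 := by
  have hdu : #{w ∈ S | G.Adj u w} ≤ 2 :=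
    (card_filter_adj_le_of_subset (T := {a, b}) fun w hw huw => by
      simpa using hNu w hw huw).trans card_le_two
  have hda : #{w ∈ S.erase u | G.Adj a w} ≤ 1 :=
    (card_filter_adj_le_of_subset (T := {b}) fun w hw haw => by
      simpa [(mem_erase.mp hw).1] using hNa w (mem_erase.mp hw).2 haw).trans (card_singleton b).le
  have hdb : #{w ∈ (S.erase u).erase a | G.Adj b w} ≤ 0 :=
    (card_filter_adj_le_of_subset (T := ∅) fun w hw hbw => by
      simp only [mem_erase] at hw
      simpa [hw.1, hw.2.1] using hNb w hw.2.2 hbw).trans card_empty.le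
  rw [← card_edgesWithin_erase_add hu, ← card_edgesWithin_erase_add hua,
    ← card_edgesWithin_erase_add huab]
  omega

namespace P4FreeOn

variable {S : Finset V}

lemma mono {T : Finset V} (h : G.P4FreeOn S) (hT : T ⊆ S) : G.P4FreeOn T :=
  fun _ _ _ _ ha hb hc hd => h (hT ha) (hT hb) (hT hc) (hT hd)

lemma eq_or_eq_of_adj (h : G.P4FreeOn S) {x y z w : V} (hx : x ∈ S) (hy : y ∈ S) (hz : z ∈ S)
    (hw : w ∈ S) (hxy : G.Adj x y) (hxz : G.Adj x z) (hyz : y ≠ z) (hyw : G.Adj y w) :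
    w = x ∨ w = z := by
  by_contra! hne
  exact h hw hy hx hz hyw.symm hxy.symm hxz hne.1 hyz hne.2

theorem card_edgesWithin_le [DecidableEq V] [DecidableRel G.Adj] (h : G.P4FreeOn S) :
    #(G.edgesWithin S) ≤ #S := by
  induction S using Finset.strongInduction with
  | H S ih =>
  by_cases hlow : ∃ u ∈ S, #{w ∈ S | G.Adj u w} ≤ 1
  · obtain ⟨u, hu, hdeg⟩ := hlow
    have := ih _ (erase_ssubset hu) (h.mono (erase_subset u S))
    have := card_erase_of_mem hu
    have := card_pos.mpr ⟨u, hu⟩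
    have := card_edgesWithin_erase_add (G := G) hu
    omega
  push Not at hlow
  obtain rfl | ⟨u, hu⟩ := S.eq_empty_or_nonempty
  · simp [edgesWithin]
  obtain ⟨a, ha, b, hb, hab_ne⟩ := one_lt_card.mp (hlow u hu)
  obtain ⟨c, hc, hcu⟩ := exists_mem_ne (hlow a (mem_filter.mp ha).1) u
  simp only [mem_filter] at ha hb hc
  have hNa : ∀ w ∈ S, G.Adj a w → w = u ∨ w = b := fun w hw =>
    h.eq_or_eq_of_adj hu ha.1 hb.1 hw ha.2 hb.2 hab_ne
  have hNb : ∀ w ∈ S, G.Adj b w → w = u ∨ w = a := fun w hw =>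
    h.eq_or_eq_of_adj hu hb.1 ha.1 hw hb.2 ha.2 hab_ne.symm
  -- the second neighbour `c` of `a` can only be `b`
  have hab : G.Adj a b := (hNa c hc.1 hc.2).resolve_left hcu ▸ hc.2
  have hNu : ∀ w ∈ S, G.Adj u w → w = a ∨ w = b := fun w hw huw =>
    h.eq_or_eq_of_adj ha.1 hu hb.1 hw ha.2.symm hab hb.2.ne huw
  have hua : a ∈ S.erase u := mem_erase.mpr ⟨ha.2.ne', ha.1⟩
  have huab : b ∈ (S.erase u).erase a :=
    mem_erase.mpr ⟨hab_ne.symm, mem_erase.mpr ⟨hb.2.ne', hb.1⟩⟩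
  have hsub : (S.erase u).erase a ⊆ S := (erase_subset _ _).trans (erase_subset _ _)
  have := card_erase_of_mem huab
  have := card_erase_of_mem hua
  have := card_erase_of_mem hu
  have := card_pos.mpr ⟨b, huab⟩
  have := card_pos.mpr ⟨a, hua⟩
  calc #(G.edgesWithin S)
      ≤ #(G.edgesWithin (((S.erase u).erase a).erase b)) + 3 :=
        card_edgesWithin_le_of_isolated_triple hu hua huab hNu hNa hNb
    _ ≤ #(((S.erase u).erase a).erase b) + 3 := by
        gcongr
        exact ih _ ((erase_ssubset huab).trans_subset hsub) (h.mono ((erase_subset _ _).trans hsub))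
    _ = #S := by omega

end P4FreeOn

end SimpleGraph

open SimpleGraph

lemma C5Free.p4FreeOn_neighborFinset {V : Type*} {G : SimpleGraph V} (h5 : C5Free G) (v : V)
    [Fintype (G.neighborSet v)] :
    G.P4FreeOn (G.neighborFinset v) := by
  intro a b c d ha hb hc hd hab hbc hcd hac hbd had
  rw [mem_neighborFinset] at ha hb hc hd
  refine h5 ⟨![v, a, b, c, d], ?_, ?_⟩
  · have := ha.ne; have := hb.ne; have := hc.ne; have := hd.ne
    have := hab.ne; have := hbc.ne; have := hcd.ne
    intro i j hij
    fin_cases i <;> fin_cases j <;> simp_all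
  · intro i
    fin_cases i <;> simp_all [hd.symm]

theorem stmt7 {V : Type*} [Fintype V] [DecidableEq V] (G : SimpleGraph V)
    [DecidableRel G.Adj] (h5 : C5Free G) (v : V) :
    (G.edgeFinset.filter fun e => ∀ x ∈ e, x ∈ G.neighborFinset v).card
      ≤ G.degree v := by
  rw [filter_edgeFinset_eq_edgesWithin, ← card_neighborFinset_eq_degree]
  exact (h5.p4FreeOn_neighborFinset v).card_edgesWithin_le
end

section
/- Let p ≥ 2 be an integer, and let a, y be real numbers with 1/2 ≤ a < 1 and 0 < y < 1 - a. Then (y + a)·(1 - a - y)^p + (1 - a - y)·a^p < a·(1 - a)^p + a^p·(1 - a). -/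
theorem stmt8 (p : ℕ) (hp : 2 ≤ p) (a y : ℝ)
    (ha : 1/2 ≤ a) (ha' : a < 1) (hy : 0 < y) (hy' : y < 1 - a) :
    (y + a) * (1 - a - y) ^ p + (1 - a - y) * a ^ p
      < a * (1 - a) ^ p + a ^ p * (1 - a) := by
  have hb : 0 < 1 - a - y := by linarith
  have h1 : (1 - a - y) ^ (p - 1) ≤ (1 - a) ^ (p - 1) :=
    pow_le_pow_left₀ hb.le (by linarith) _
  have h2 : (1 - a - y) ^ p = (1 - a - y) ^ (p - 1) * (1 - a - y) := by
    rw [← pow_succ]; congr 1; omega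
  have h3 : (1 - a) ^ p = (1 - a) ^ (p - 1) * (1 - a) := by
    rw [← pow_succ]; congr 1; omega
  have hap : 0 < a ^ p := pow_pos (by linarith) p
  have hX : 0 ≤ (1 - a - y) ^ (p - 1) := pow_nonneg hb.le _
  have key : (y + a) * ((1 - a - y) ^ (p - 1) * (1 - a - y)) ≤
      a * ((1 - a) ^ (p - 1) * (1 - a)) := by
    have h4 : (y + a) * (1 - a - y) ≤ a * (1 - a) := by nlinarith
    nlinarith [mul_le_mul_of_nonneg_right h1 (mul_nonneg (by linarith : (0:ℝ) ≤ y + a) hb.le),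
      mul_le_mul_of_nonneg_right h4 hX]
  rw [h2, h3]
  nlinarith [mul_pos hy hap]
end
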